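/- Partial Neyman-orthogonality of the IPTW-learner at the truth: if the target model equals the true conditional outcome density ξ, then for any direction ξ̂ the pathwise derivative of the inverse-propensity-weighted log-likelihood risk vanishes: (d/dt)|_{t=0} E[(𝟙{A = a}/π̂(X)) · log(ξ + t(ξ̂ − ξ))(Y | X)] = 0; equivalently, E[(𝟙{A = a}/π̂(X)) · (ξ̂ − ξ)(Y | X)/ξ(Y | X)] = 0. -/

import Mathlib

/-!
At the truth, the score of the log-likelihood in the direction `ξ̂ - ξ` is `(ξ̂ - ξ) / ξ`. Given
`X = x`, the treated outcomes have density `ξ(· | x)` against `ν`, so the inverse-propensity-weighted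
score integrates to `π(x) / π̂(x) · ∫ (ξ̂ - ξ)(y | x) dν(y)`, which vanishes because both densities
have mass one. Since all densities stay in `[c, C]`, the risk along the path `ξ + t (ξ̂ - ξ)` may be
differentiated under the integral sign, and its derivative at `t = 0` is exactly that expectation.
-/

open MeasureTheory ProbabilityTheory

lemma abs_sub_div_le_of_mem_Icc {u v c C : ℝ} (hc : 0 < c) (hu : u ∈ Set.Icc c C)
    (hv : v ∈ Set.Icc c C) : |(u - v) / v| ≤ (C - c) / c := by
  rw [abs_div, abs_of_pos (hc.trans_le hv.1)]
  exact div_le_div₀ (by linarith [hu.1, hu.2]) (Real.dist_le_of_mem_Icc hu hv) hc hv.1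

lemma abs_log_le_of_mem_Icc {u c C : ℝ} (hc : 0 < c) (hu : u ∈ Set.Icc c C) :
    |Real.log u| ≤ max |Real.log c| |Real.log C| :=
  abs_le_max_abs_abs (Real.log_le_log hc hu.1) (Real.log_le_log (hc.trans_le hu.1) hu.2)

lemma half_le_add_mul_of_abs_lt {g Δ t c D : ℝ} (hgc : c ≤ g) (hΔD : |Δ| ≤ D)
    (ht : |t| < c / (2 * (|D| + 1))) : c / 2 ≤ g + t * Δ := by
  have htD : |t| * (|D| + 1) < c / 2 := by
    rw [lt_div_iff₀ (by positivity)] at ht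
    linarith
  have htΔ : |t * Δ| ≤ |t| * (|D| + 1) := by
    rw [abs_mul]
    gcongr
    linarith [le_abs_self D]
  linarith [neg_abs_le (t * Δ)]

lemma hasDerivAt_mul_log_add_mul {w g Δ t : ℝ} (h : g + t * Δ ≠ 0) :
    HasDerivAt (fun s => w * Real.log (g + s * Δ)) (w * (Δ / (g + t * Δ))) t := by
  simpa using ((((hasDerivAt_id t).mul_const Δ).const_add g).log h).const_mul w

theorem hasDerivAt_integral_mul_log_add_mul {Ω : Type*} [MeasurableSpace Ω] {μ : Measure Ω}
    [IsFiniteMeasure μ] {w g Δ : Ω → ℝ} {W c D : ℝ} (hw : Measurable w) (hg : Measurable g)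
    (hΔ : Measurable Δ) (hwW : ∀ ω, |w ω| ≤ W) (hc : 0 < c) (hgc : ∀ ω, c ≤ g ω)
    (hΔD : ∀ ω, |Δ ω| ≤ D) (hint : Integrable (fun ω => w ω * Real.log (g ω)) μ) :
    HasDerivAt (fun t => ∫ ω, w ω * Real.log (g ω + t * Δ ω) ∂μ)
      (∫ ω, w ω * (Δ ω / g ω) ∂μ) 0 := by
  have hδ : 0 < c / (2 * (|D| + 1)) := by positivity
  have hpath : ∀ ω, ∀ t ∈ Metric.ball (0 : ℝ) (c / (2 * (|D| + 1))), c / 2 ≤ g ω + t * Δ ω :=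
    fun ω t ht => half_le_add_mul_of_abs_lt (hgc ω) (hΔD ω) (by simpa using ht)
  have hscore_le : ∀ ω, ∀ t ∈ Metric.ball (0 : ℝ) (c / (2 * (|D| + 1))),
      ‖w ω * (Δ ω / (g ω + t * Δ ω))‖ ≤ W * (D / (c / 2)) := by
    intro ω t ht
    have hW : 0 ≤ W := (abs_nonneg _).trans (hwW ω)
    have hD : 0 ≤ D := (abs_nonneg _).trans (hΔD ω)
    have hpos : 0 < g ω + t * Δ ω := by linarith [hpath ω t ht]
    rw [norm_mul, Real.norm_eq_abs, norm_div, Real.norm_eq_abs, Real.norm_of_nonneg hpos.le]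
    exact mul_le_mul (hwW ω) (div_le_div₀ hD (hΔD ω) (by positivity) (hpath ω t ht))
      (div_nonneg (abs_nonneg _) hpos.le) hW
  have key := hasDerivAt_integral_of_dominated_loc_of_deriv_le
    (F := fun t ω => w ω * Real.log (g ω + t * Δ ω))
    (F' := fun t ω => w ω * (Δ ω / (g ω + t * Δ ω)))
    (Metric.ball_mem_nhds 0 hδ)
    (.of_forall fun t => (by fun_prop : Measurable _).aestronglyMeasurable)
    (by simpa only [zero_mul, add_zero] using hint)
    (by fun_prop : Measurable _).aestronglyMeasurable
    (.of_forall hscore_le) (integrable_const _)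
    (.of_forall fun ω t ht => hasDerivAt_mul_log_add_mul (by linarith [hpath ω t ht]))
  simpa only [zero_mul, add_zero] using key.2

theorem integral_mul_weight_mul_score_eq_zero {Ω 𝒳 𝒴 : Type*} [MeasurableSpace Ω]
    [MeasurableSpace 𝒳] [MeasurableSpace 𝒴] {P : Measure Ω} {ν : Measure 𝒴} {X : Ω → 𝒳}
    {Y : Ω → 𝒴} {I : Ω → ℝ} {π : 𝒳 → ℝ} {ξ ξh : 𝒴 × 𝒳 → ℝ} {c C : ℝ} (hc : 0 < c)
    (hξ : Measurable ξ) (hξmem : ∀ q, ξ q ∈ Set.Icc c C) (hξnorm : ∀ x, ∫ y, ξ (y, x) ∂ν = 1)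
    (hξh : Measurable ξh) (hξhmem : ∀ q, ξh q ∈ Set.Icc c C)
    (hξhnorm : ∀ x, ∫ y, ξh (y, x) ∂ν = 1)
    (hdens : ∀ f : 𝒴 × 𝒳 → ℝ, Measurable f → (∃ B : ℝ, ∀ q, |f q| ≤ B) →
      ∫ ω, I ω * f (Y ω, X ω) ∂P = ∫ ω, π (X ω) * ∫ y, f (y, X ω) * ξ (y, X ω) ∂ν ∂P)
    {v : 𝒳 → ℝ} {V : ℝ} (hv : Measurable v) (hvV : ∀ x, |v x| ≤ V) :
    ∫ ω, I ω * (v (X ω) * ((ξh (Y ω, X ω) - ξ (Y ω, X ω)) / ξ (Y ω, X ω))) ∂P = 0 := by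
  have hbound : ∀ q : 𝒴 × 𝒳, |v q.2 * ((ξh q - ξ q) / ξ q)| ≤ V * ((C - c) / c) := fun q => by
    rw [abs_mul]
    exact mul_le_mul (hvV q.2) (abs_sub_div_le_of_mem_Icc hc (hξhmem q) (hξmem q))
      (abs_nonneg _) ((abs_nonneg _).trans (hvV q.2))
  have hinner : ∀ x, ∫ y, v x * ((ξh (y, x) - ξ (y, x)) / ξ (y, x)) * ξ (y, x) ∂ν = 0 := by
    intro x
    have hcancel : ∀ y, v x * ((ξh (y, x) - ξ (y, x)) / ξ (y, x)) * ξ (y, x)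
        = v x * (ξh (y, x) - ξ (y, x)) := fun y => by
      field_simp [(hc.trans_le (hξmem (y, x)).1).ne']
    -- both sections have integral `1 ≠ 0`, hence are integrable
    have hint : ∀ f : 𝒴 × 𝒳 → ℝ, (∫ y, f (y, x) ∂ν = 1) → Integrable (fun y => f (y, x)) ν :=
      fun f hf => Integrable.of_integral_ne_zero (by rw [hf]; exact one_ne_zero)
    simp_rw [hcancel]
    rw [integral_const_mul, integral_sub (hint ξh (hξhnorm x)) (hint ξ (hξnorm x)), hξhnorm x,
      hξnorm x, sub_self, mul_zero]
  have := hdens (fun q => v q.2 * ((ξh q - ξ q) / ξ q)) (by fun_prop) ⟨_, hbound⟩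
  simpa only [hinner, mul_zero, integral_zero] using this

theorem iptw_partial_neyman_orthogonality_general
    {Ω : Type*} [MeasurableSpace Ω]
    (P : Measure Ω) [IsProbabilityMeasure P]
    {𝒳 : Type*} [MeasurableSpace 𝒳]
    {𝒴 : Type*} [MeasurableSpace 𝒴]
    (X : Ω → 𝒳) (hX : Measurable X)
    (A : Ω → Bool) (hA : Measurable A)
    (Y : Ω → 𝒴) (hY : Measurable Y)
    (a : Bool)
    -- propensity score: σ(X)-measurable version of E[𝟙{A = a} | σ(X)]
    (π : 𝒳 → ℝ)
    -- strong overlap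
    (ε : ℝ) (hε : 0 < ε)
    -- density setup
    (ν : Measure 𝒴)
    (c C : ℝ) (hc : 0 < c)
    (ξ : 𝒴 × 𝒳 → ℝ) (hξmeas : Measurable ξ)
    (hξmem : ∀ q, ξ q ∈ Set.Icc c C)
    (hξnorm : ∀ x, ∫ y, ξ (y, x) ∂ν = 1)
    -- ξ is the conditional outcome density
    (hξdens : ∀ f : 𝒴 × 𝒳 → ℝ, Measurable f → (∃ B : ℝ, ∀ q, |f q| ≤ B) →
      ∫ ω, (if A ω = a then (1 : ℝ) else 0) * f (Y ω, X ω) ∂P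
        = ∫ ω, π (X ω) * ∫ y, f (y, X ω) * ξ (y, X ω) ∂ν ∂P)
    -- nuisance estimates
    (πh : 𝒳 → ℝ) (hπhmeas : Measurable πh) (hπhmem : ∀ x, πh x ∈ Set.Icc ε 1)
    (ξh : 𝒴 × 𝒳 → ℝ) (hξhmeas : Measurable ξh)
    (hξhmem : ∀ q, ξh q ∈ Set.Icc c C)
    (hξhnorm : ∀ x, ∫ y, ξh (y, x) ∂ν = 1) :
    HasDerivAt (fun t : ℝ => ∫ ω,
        ((if A ω = a then (1 : ℝ) else 0) / πh (X ω))
          * Real.log (ξ (Y ω, X ω) + t * (ξh (Y ω, X ω) - ξ (Y ω, X ω))) ∂P) 0 0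
    ∧
    ∫ ω, ((if A ω = a then (1 : ℝ) else 0) / πh (X ω))
        * ((ξh (Y ω, X ω) - ξ (Y ω, X ω)) / ξ (Y ω, X ω)) ∂P = 0 := by
  have hπh_pos : ∀ x, 0 < πh x := fun x => hε.trans_le (hπhmem x).1
  have hI : Measurable fun ω => if A ω = a then (1 : ℝ) else 0 :=
    measurable_const.ite (hA (measurableSet_singleton a)) measurable_const
  have hw : Measurable fun ω => (if A ω = a then (1 : ℝ) else 0) / πh (X ω) := by fun_prop
  have hw_le : ∀ ω, |(if A ω = a then (1 : ℝ) else 0) / πh (X ω)| ≤ ε⁻¹ := fun ω => by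
    rw [abs_div, abs_of_pos (hπh_pos _), ← one_div]
    exact div_le_div₀ zero_le_one (by split_ifs <;> simp) hε (hπhmem _).1
  have hscore : ∫ ω, ((if A ω = a then (1 : ℝ) else 0) / πh (X ω))
      * ((ξh (Y ω, X ω) - ξ (Y ω, X ω)) / ξ (Y ω, X ω)) ∂P = 0 := by
    simpa only [div_eq_mul_inv, mul_assoc] using
      integral_mul_weight_mul_score_eq_zero (I := fun ω => if A ω = a then (1 : ℝ) else 0)
        hc hξmeas hξmem hξnorm hξhmeas hξhmem hξhnorm hξdens (v := fun x => (πh x)⁻¹)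
        (by fun_prop) fun x => by
          rw [abs_inv, abs_of_pos (hπh_pos x)]
          exact inv_anti₀ hε (hπhmem x).1
  have hlog_int : Integrable (fun ω => (if A ω = a then (1 : ℝ) else 0) / πh (X ω)
      * Real.log (ξ (Y ω, X ω))) P :=
    .of_bound (by fun_prop) (ε⁻¹ * max |Real.log c| |Real.log C|) (.of_forall fun ω => by
      rw [norm_mul, Real.norm_eq_abs, Real.norm_eq_abs]
      exact mul_le_mul (hw_le ω) (abs_log_le_of_mem_Icc hc (hξmem _)) (abs_nonneg _)
        (by positivity))
  refine ⟨?_, hscore⟩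
  exact (hasDerivAt_integral_mul_log_add_mul hw (by fun_prop) (by fun_prop) hw_le hc
    (fun ω => (hξmem _).1) (fun ω => Real.dist_le_of_mem_Icc (hξhmem _) (hξmem _))
    hlog_int).congr_deriv hscore

/-- Partial Neyman-orthogonality of the IPTW-learner at the truth: if the target
model equals the true conditional outcome density ξ, then for any direction ξ̂ the pathwise
derivative of the inverse-propensity-weighted log-likelihood risk vanishes:
`(d/dt)|₀ E[(𝟙{A = a}/π̂(X)) · log(ξ + t(ξ̂ − ξ))(Y | X)] = 0`; equivalently,
`E[(𝟙{A = a}/π̂(X)) · (ξ̂ − ξ)(Y | X)/ξ(Y | X)] = 0`. -/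
theorem iptw_partial_neyman_orthogonality
    {Ω : Type*} [MeasurableSpace Ω]
    (P : Measure Ω) [IsProbabilityMeasure P]
    {𝒳 : Type*} [MeasurableSpace 𝒳] [StandardBorelSpace 𝒳]
    {𝒴 : Type*} [MeasurableSpace 𝒴] [StandardBorelSpace 𝒴]
    (X : Ω → 𝒳) (hX : Measurable X)
    (A : Ω → Bool) (hA : Measurable A)
    (Y : Ω → 𝒴) (hY : Measurable Y)
    (a : Bool)
    -- propensity score: σ(X)-measurable version of E[𝟙{A = a} | σ(X)]
    (π : 𝒳 → ℝ) (hπmeas : Measurable π)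
    (hπver : P[fun ω => (if A ω = a then (1 : ℝ) else 0) |
        MeasurableSpace.comap X inferInstance] =ᵐ[P] fun ω => π (X ω))
    -- strong overlap
    (ε : ℝ) (hε : 0 < ε)
    (hoverlap : ∀ᵐ ω ∂P, ε ≤ π (X ω) ∧ π (X ω) ≤ 1 - ε)
    -- density setup
    (ν : Measure 𝒴) [IsFiniteMeasure ν]
    (c C : ℝ) (hc : 0 < c) (hcC : c ≤ C)
    (ξ : 𝒴 × 𝒳 → ℝ) (hξmeas : Measurable ξ)
    (hξmem : ∀ q, ξ q ∈ Set.Icc c C)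
    (hξnorm : ∀ x, ∫ y, ξ (y, x) ∂ν = 1)
    -- ξ is the conditional outcome density
    (hξdens : ∀ f : 𝒴 × 𝒳 → ℝ, Measurable f → (∃ B : ℝ, ∀ q, |f q| ≤ B) →
      ∫ ω, (if A ω = a then (1 : ℝ) else 0) * f (Y ω, X ω) ∂P
        = ∫ ω, π (X ω) * ∫ y, f (y, X ω) * ξ (y, X ω) ∂ν ∂P)
    -- nuisance estimates
    (πh : 𝒳 → ℝ) (hπhmeas : Measurable πh) (hπhmem : ∀ x, πh x ∈ Set.Icc ε 1)
    (ξh : 𝒴 × 𝒳 → ℝ) (hξhmeas : Measurable ξh)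
    (hξhmem : ∀ q, ξh q ∈ Set.Icc c C)
    (hξhnorm : ∀ x, ∫ y, ξh (y, x) ∂ν = 1) :
    HasDerivAt (fun t : ℝ => ∫ ω,
        ((if A ω = a then (1 : ℝ) else 0) / πh (X ω))
          * Real.log (ξ (Y ω, X ω) + t * (ξh (Y ω, X ω) - ξ (Y ω, X ω))) ∂P) 0 0
    ∧
    ∫ ω, ((if A ω = a then (1 : ℝ) else 0) / πh (X ω))
        * ((ξh (Y ω, X ω) - ξ (Y ω, X ω)) / ξ (Y ω, X ω)) ∂P = 0 :=
  iptw_partial_neyman_orthogonality_general P X hX A hA Y hY a π ε hε ν c C hc ξ hξmeas hξmem hξnorm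
    hξdens πh hπhmeas hπhmem ξh hξhmeas hξhmem hξhnorm
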